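/- Let 0 < σ̲ ≤ σ̄ and u(t,x) = ∫_{−∞}^x ρ(t,y) dy with ρ(t,y) = (√2/((σ̄+σ̲)√(πt)))·[exp(−y²/(2σ̄²t)) for y ≤ 0, exp(−y²/(2σ̲²t)) for y > 0]. Then for every x ≠ 0, u(t,x) → 1_{[0,∞)}(x) as t → 0⁺; that is, lim_{t→0⁺} u(t,x) = 0 for x < 0 and lim_{t→0⁺} u(t,x) = 1 for x > 0. -/

import Mathlib

/-!
The density is self-similar, `ρ t y = (√t)⁻¹ * ρ 1 ((√t)⁻¹ * y)`, so `u t x = F ((√t)⁻¹ * x)` where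
`F` is the distribution function of the integrable density `ρ 1`, whose total mass is `1`.
As `t → 0⁺` the argument `(√t)⁻¹ * x` tends to `-∞` or `+∞` according to the sign of `x`, and
`F` tends to `0`, resp. `1`, there.
-/

open Real MeasureTheory Filter Set Topology

theorem integral_comp_mul_left_Iic {E : Type*} [NormedAddCommGroup E] [NormedSpace ℝ E]
    (g : ℝ → E) (a : ℝ) {b : ℝ} (hb : 0 < b) :
    ∫ x in Iic a, g (b * x) = b⁻¹ • ∫ x in Iic (b * a), g x := by
  rw [← integral_indicator measurableSet_Iic, ← integral_indicator measurableSet_Iic,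
    ← abs_of_pos (inv_pos.mpr hb), ← Measure.integral_comp_mul_left]
  congr
  ext1 x
  rw [← indicator_comp_right, preimage_const_mul_Iic₀ _ hb, mul_div_cancel_left₀ _ hb.ne',
    Function.comp_def]

theorem tendsto_setIntegral_Iic_integral {ι E : Type*} [NormedAddCommGroup E] [NormedSpace ℝ E]
    {μ : Measure ℝ} {l : Filter ι} [l.IsCountablyGenerated] {f : ℝ → E} {a : ι → ℝ}
    (hf : Integrable f μ) (ha : Tendsto a l atTop) :
    Tendsto (fun i => ∫ x in Iic (a i), f x ∂μ) l (𝓝 (∫ x, f x ∂μ)) := by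
  have hsplit : ∀ i, ∫ x, f x ∂μ - ∫ x in Ioi (a i), f x ∂μ = ∫ x in Iic (a i), f x ∂μ :=
    fun i => by rw [← intervalIntegral.integral_Iic_add_Ioi hf.integrableOn hf.integrableOn,
      add_sub_cancel_right]
  simpa only [hsplit, sub_zero] using (tendsto_integral_Ioi_zero (f := f) (μ := μ) ha).const_sub
    (∫ x, f x ∂μ)

theorem tendsto_inv_sqrt_mul_atTop {c : ℝ} (hc : 0 < c) :
    Tendsto (fun t => (√t)⁻¹ * c) (𝓝[>] 0) atTop := by
  simp_rw [← sqrt_inv]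
  exact (tendsto_sqrt_atTop.comp tendsto_inv_nhdsGT_zero).atTop_mul_const hc

theorem tendsto_inv_sqrt_mul_atBot {c : ℝ} (hc : c < 0) :
    Tendsto (fun t => (√t)⁻¹ * c) (𝓝[>] 0) atBot := by
  simp_rw [← sqrt_inv]
  exact (tendsto_sqrt_atTop.comp tendsto_inv_nhdsGT_zero).atTop_mul_const_of_neg hc

theorem exp_neg_sq_div_eq_exp_neg_mul_sq (c : ℝ) :
    (fun y : ℝ => exp (-y ^ 2 / c)) = fun y => exp (-c⁻¹ * y ^ 2) := by
  ext y
  rw [neg_mul, ← div_eq_inv_mul, neg_div]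

theorem integral_Ioi_exp_neg_sq_div {σ t : ℝ} (hσ : 0 < σ) (ht : 0 < t) :
    ∫ y in Ioi (0:ℝ), exp (-y ^ 2 / (2 * σ ^ 2 * t)) = σ * √(2 * π * t) / 2 := by
  have hπ : π / (2 * σ ^ 2 * t)⁻¹ = σ ^ 2 * (2 * π * t) := by field_simp
  rw [exp_neg_sq_div_eq_exp_neg_mul_sq, integral_gaussian_Ioi, hπ, sqrt_mul (sq_nonneg σ),
    sqrt_sq hσ.le]

theorem integral_Iic_exp_neg_sq_div {σ t : ℝ} (hσ : 0 < σ) (ht : 0 < t) :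
    ∫ y in Iic (0:ℝ), exp (-y ^ 2 / (2 * σ ^ 2 * t)) = σ * √(2 * π * t) / 2 := by
  have h := integral_comp_neg_Iic 0 fun y => exp (-y ^ 2 / (2 * σ ^ 2 * t))
  simp only [neg_sq, neg_zero] at h
  rw [h, integral_Ioi_exp_neg_sq_div hσ ht]

theorem integrable_exp_neg_sq_div {σ t : ℝ} (hσ : 0 < σ) (ht : 0 < t) :
    Integrable fun y : ℝ => exp (-y ^ 2 / (2 * σ ^ 2 * t)) := by
  rw [exp_neg_sq_div_eq_exp_neg_mul_sq]
  exact integrable_exp_neg_mul_sq (inv_pos.2 (by positivity))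

noncomputable def gNormalDensity (σl σu t y : ℝ) : ℝ :=
  √2 / ((σu + σl) * √(π * t)) *
    if y ≤ 0 then exp (-y ^ 2 / (2 * σu ^ 2 * t)) else exp (-y ^ 2 / (2 * σl ^ 2 * t))

section gNormalDensity

variable {σl σu t : ℝ}

theorem gNormalDensity_eq_of_nonpos {y : ℝ} (hy : y ≤ 0) :
    gNormalDensity σl σu t y = √2 / ((σu + σl) * √(π * t)) * exp (-y ^ 2 / (2 * σu ^ 2 * t)) := by
  rw [gNormalDensity, if_pos hy]

theorem gNormalDensity_eq_of_pos {y : ℝ} (hy : 0 < y) :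
    gNormalDensity σl σu t y = √2 / ((σu + σl) * √(π * t)) * exp (-y ^ 2 / (2 * σl ^ 2 * t)) := by
  rw [gNormalDensity, if_neg hy.not_ge]

theorem integrable_gNormalDensity (hl : 0 < σl) (hu : 0 < σu) (ht : 0 < t) :
    Integrable (gNormalDensity σl σu t) := by
  have hpiece : Integrable ((Iic (0:ℝ)).piecewise (fun y => exp (-y ^ 2 / (2 * σu ^ 2 * t)))
      fun y => exp (-y ^ 2 / (2 * σl ^ 2 * t))) :=
    .piecewise measurableSet_Iic (integrable_exp_neg_sq_div hu ht).integrableOn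
      (integrable_exp_neg_sq_div hl ht).integrableOn
  exact hpiece.const_mul _

theorem integral_gNormalDensity (hl : 0 < σl) (hu : 0 < σu) (ht : 0 < t) :
    ∫ y, gNormalDensity σl σu t y = 1 := by
  have hint := integrable_gNormalDensity hl hu ht
  rw [← intervalIntegral.integral_Iic_add_Ioi hint.integrableOn hint.integrableOn,
    setIntegral_congr_fun measurableSet_Iic fun y hy => gNormalDensity_eq_of_nonpos hy,
    setIntegral_congr_fun measurableSet_Ioi fun y hy => gNormalDensity_eq_of_pos hy,
    integral_const_mul, integral_const_mul, integral_Iic_exp_neg_sq_div hu ht,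
    integral_Ioi_exp_neg_sq_div hl ht, mul_assoc 2, sqrt_mul two_pos.le]
  have h2 : √2 ^ 2 = 2 := sq_sqrt two_pos.le
  have hπt : 0 < √(π * t) := sqrt_pos.2 (by positivity)
  have hsum : 0 < σu + σl := add_pos hu hl
  field_simp
  linear_combination h2

theorem gNormalDensity_eq_scale (ht : 0 < t) (y : ℝ) :
    gNormalDensity σl σu t y = (√t)⁻¹ * gNormalDensity σl σu 1 ((√t)⁻¹ * y) := by
  have hst : 0 < √t := sqrt_pos.2 ht
  have hsign : (√t)⁻¹ * y ≤ 0 ↔ y ≤ 0 := by simp [mul_nonpos_iff, hst.le, not_le.2 hst]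
  have hsq : ∀ σ : ℝ, -((√t)⁻¹ * y) ^ 2 / (2 * σ ^ 2) = -y ^ 2 / (2 * σ ^ 2 * t) := by
    intro σ
    rw [mul_pow, inv_pow, sq_sqrt ht.le]
    field_simp
  simp only [gNormalDensity, hsign, mul_one, hsq, sqrt_mul pi_pos.le t]
  field_simp

theorem setIntegral_Iic_gNormalDensity (ht : 0 < t) (x : ℝ) :
    ∫ y in Iic x, gNormalDensity σl σu t y =
      ∫ z in Iic ((√t)⁻¹ * x), gNormalDensity σl σu 1 z := by
  have hst : 0 < (√t)⁻¹ := inv_pos.2 (sqrt_pos.2 ht)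
  simp_rw [gNormalDensity_eq_scale ht]
  rw [integral_const_mul, integral_comp_mul_left_Iic _ _ hst, smul_eq_mul,
    mul_inv_cancel_left₀ hst.ne']

end gNormalDensity

theorem stmt_8 (σl σu : ℝ) (hl : 0 < σl) (hle : σl ≤ σu)
    (ρ : ℝ → ℝ → ℝ)
    (hρ : ∀ t y, ρ t y = (Real.sqrt 2 / ((σu + σl) * Real.sqrt (Real.pi * t))) *
      (if y ≤ 0 then Real.exp (-y ^ 2 / (2 * σu ^ 2 * t))
       else Real.exp (-y ^ 2 / (2 * σl ^ 2 * t))))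
    (u : ℝ → ℝ → ℝ)
    (hu : ∀ t x, u t x = ∫ y in Set.Iic x, ρ t y) :
    ∀ x : ℝ, x ≠ 0 →
      Tendsto (fun t => u t x) (nhdsWithin 0 (Set.Ioi 0))
        (nhds (if x < 0 then (0:ℝ) else 1)) := by
  intro x hx
  have hσu : 0 < σu := hl.trans_le hle
  have hρ_eq : ρ = gNormalDensity σl σu := funext₂ hρ
  have hu_scale : ∀ᶠ t in 𝓝[>] 0, ∫ z in Iic ((√t)⁻¹ * x), gNormalDensity σl σu 1 z = u t x := by
    filter_upwards [self_mem_nhdsWithin] with t ht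
    rw [hu, hρ_eq, setIntegral_Iic_gNormalDensity ht]
  rcases hx.lt_or_gt with hneg | hpos
  · rw [if_pos hneg]
    exact (tendsto_integral_Iic_zero (tendsto_inv_sqrt_mul_atBot hneg)).congr' hu_scale
  · rw [if_neg hpos.not_gt, ← integral_gNormalDensity hl hσu one_pos]
    exact (tendsto_setIntegral_Iic_integral (integrable_gNormalDensity hl hσu one_pos)
      (tendsto_inv_sqrt_mul_atTop hpos)).congr' hu_scale
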